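/- arXiv:2401.03824 — 2 statements merged into one kernel-verified Lean document; each statement's English description precedes it below -/
import Mathlib

section
/- Consider a feedforward network with L ≥ 2 layers in which all hidden layers have the same width h, the hidden activation σ is either the hyperbolic tangent tanh or the logistic sigmoid t ↦ 1/(1+e^{−t}), and the last layer output is f_θ(x) = s(a^L) where s(t) = 1/(1+e^{−t}), together with a dataset of m points. Then the MSE empirical risk θ ↦ (1/m)Σ_{i=1}^m (y_i − f_θ(x_i))², as a function of the parameters θ ∈ ℝ^ñ, is a Pfaffian function of format (3(L−2)+5, 2, m(h(L−1)+1)). -/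
open MvPolynomial

noncomputable section

/-- A Pfaffian chain of order `ℓ` and degree `α` on an open set `U ⊆ ℝ^ι`:
real analytic functions whose partial derivatives are polynomials of total degree at most `α`
in the coordinates and the previous chain functions (including itself). -/
def IsPfaffianChain {ι : Type} [Fintype ι] [DecidableEq ι] (ℓ α : ℕ)
    (U : Set (ι → ℝ)) (f : Fin ℓ → (ι → ℝ) → ℝ) : Prop :=
  IsOpen U ∧ 1 ≤ α ∧ (∀ i, AnalyticOnNhd ℝ (f i) U) ∧
    ∀ (i : Fin ℓ) (j : ι), ∃ P : MvPolynomial (ι ⊕ Fin (i.1 + 1)) ℝ, P.totalDegree ≤ α ∧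
      ∀ x ∈ U, fderiv ℝ (f i) x (Pi.single j 1) =
        MvPolynomial.eval (Sum.elim x fun k : Fin (i.1 + 1) => f (Fin.castLE i.isLt k) x) P

/-- `g : ℝ^ι → ℝ` is a Pfaffian function of format `(α, β, ℓ)` on the open set `U`:
it is a polynomial of total degree at most `β` in the coordinates and the functions of a
Pfaffian chain of order `ℓ` and degree `α`. -/
def IsPfaffianWithFormat {ι : Type} [Fintype ι] [DecidableEq ι]
    (U : Set (ι → ℝ)) (g : (ι → ℝ) → ℝ) (α β ℓ : ℕ) : Prop :=
  ∃ f : Fin ℓ → (ι → ℝ) → ℝ, IsPfaffianChain ℓ α U f ∧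
    ∃ Q : MvPolynomial (ι ⊕ Fin ℓ) ℝ, Q.totalDegree ≤ β ∧
      ∀ x ∈ U, g x = MvPolynomial.eval (Sum.elim x fun k => f k x) Q

/-- Index set for the parameters of a feedforward network with `L` layers and widths `n`:
the augmented weight matrix of layer `l+1` (1-based) has shape `n (l+1) × (n l + 1)`,
column `0` being the bias. -/
abbrev ParamIdx (L : ℕ) (n : ℕ → ℕ) : Type :=
  Σ l : Fin L, Fin (n (l.1 + 1)) × Fin (n l.1 + 1)

/-- Entry `(j, i)` of the augmented weight matrix of (1-based) layer `l+1`. -/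
def netWeight {L : ℕ} {n : ℕ → ℕ} (θ : ParamIdx L n → ℝ) (l : ℕ)
    (j : Fin (n (l + 1))) (i : Fin (n l + 1)) : ℝ :=
  if hl : l < L then θ ⟨⟨l, hl⟩, (j, i)⟩ else 0

/-- Augmented layer outputs: `netZ σ θ x l = z^l = (1, σ (a^l))`, with `z^0 = (1, x)`. -/
def netZ {L : ℕ} {n : ℕ → ℕ} (σ : ℝ → ℝ) (θ : ParamIdx L n → ℝ) (x : Fin (n 0) → ℝ) :
    (l : ℕ) → Fin (n l + 1) → ℝ
  | 0 => Fin.cons 1 x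
  | l + 1 => Fin.cons 1 fun j => σ (∑ i, netWeight θ l j i * netZ σ θ x l i)

/-- Preactivations: `netPreact σ θ x l = a^{l+1} = W^{l+1} z^l` (1-based layer `l+1`). -/
def netPreact {L : ℕ} {n : ℕ → ℕ} (σ : ℝ → ℝ) (θ : ParamIdx L n → ℝ) (x : Fin (n 0) → ℝ)
    (l : ℕ) (j : Fin (n (l + 1))) : ℝ :=
  ∑ i, netWeight θ l j i * netZ σ θ x l i

/-- Output of the network with a linear last layer: `a^L` (a scalar, since `n L = 1`). -/
def netOutLin {L : ℕ} {n : ℕ → ℕ} (σ : ℝ → ℝ) (θ : ParamIdx L n → ℝ)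
    (x : Fin (n 0) → ℝ) : ℝ :=
  ∑ j, netPreact σ θ x (L - 1) j

/-- The logistic sigmoid. -/
def logisticFn (t : ℝ) : ℝ := 1 / (1 + Real.exp (-t))

/-!
Fix a data point, write `z^l` for the hidden activations and `a^{l+1} = W^{l+1} z^l`. Both
admissible activations solve a Riccati equation `σ' = c₀ + c₁ σ + c₂ σ²` (`tanh' = 1 - tanh²`,
`s' = s - s²`), hence `∂z^{l+1}_k = (c₀ + c₁ z^{l+1}_k + c₂ (z^{l+1}_k)²) ∂a^{l+1}_k`, while
`∂a^{l+1}_j = ∑ᵢ (W_{ji} ∂z^l_i + z^l_i ∂W_{ji})` with `∂W_{ji}` constant. So if the chain lists,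
for every data point, the hidden activations layer by layer followed by the output `s(a^L)`,
induction over the layers shows that `∂a^{l+1}` is a polynomial of degree `3l` in the parameters
and the preceding chain functions: each layer adds 1 for the weight and 2 for `σ'`. The chain
thus has degree `3(L-1) + 2`, and the risk is a quadratic polynomial in the outputs.
-/

theorem logisticFn_eq_sigmoid : logisticFn = Real.sigmoid := by
  funext t
  rw [logisticFn, Real.sigmoid_def, one_div]

theorem Real.tanh_eq_two_mul_sigmoid (t : ℝ) : Real.tanh t = 2 * Real.sigmoid (2 * t) - 1 := by
  rw [Real.tanh_eq, Real.sigmoid_def, show -(2 * t) = -t + -t by ring, Real.exp_add]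
  have hexp : Real.exp t * Real.exp (-t) = 1 := by
    rw [← Real.exp_add, add_neg_cancel, Real.exp_zero]
  field_simp
  linear_combination (2 * Real.exp (-t)) * hexp

def HasQuadraticDeriv (σ : ℝ → ℝ) (c₀ c₁ c₂ : ℝ) : Prop :=
  ∀ t, HasDerivAt σ (c₀ + c₁ * σ t + c₂ * σ t ^ 2) t

theorem hasQuadraticDeriv_sigmoid : HasQuadraticDeriv Real.sigmoid 0 1 (-1) :=
  fun t => (Real.hasDerivAt_sigmoid t).congr_deriv (by ring)

theorem analyticAt_tanh (t : ℝ) : AnalyticAt ℝ Real.tanh t := by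
  rw [funext Real.tanh_eq_two_mul_sigmoid]
  fun_prop

theorem hasQuadraticDeriv_tanh : HasQuadraticDeriv Real.tanh 1 0 (-1) := by
  intro t
  have hs := (Real.hasDerivAt_sigmoid (2 * t)).comp t ((hasDerivAt_id t).const_mul 2)
  rw [funext Real.tanh_eq_two_mul_sigmoid]
  refine ((hs.const_mul 2).sub_const 1).congr_deriv ?_
  ring

def IsChainPoly {I : Type*} (f : ℕ → (I → ℝ) → ℝ) (c d : ℕ) (g : (I → ℝ) → ℝ) : Prop :=
  ∃ P : MvPolynomial (I ⊕ Fin c) ℝ, P.totalDegree ≤ d ∧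
    ∀ θ, g θ = eval (Sum.elim θ fun k : Fin c => f k θ) P

namespace IsChainPoly

variable {I : Type*} {f : ℕ → (I → ℝ) → ℝ} {c d d₁ d₂ : ℕ} {g g₁ g₂ : (I → ℝ) → ℝ}

theorem congr (h : IsChainPoly f c d g₁) (he : ∀ θ, g₁ θ = g₂ θ) : IsChainPoly f c d g₂ := by
  obtain ⟨P, hP, hev⟩ := h
  exact ⟨P, hP, fun θ => he θ ▸ hev θ⟩

theorem mono_degree (hd : d₁ ≤ d₂) (h : IsChainPoly f c d₁ g) : IsChainPoly f c d₂ g := by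
  obtain ⟨P, hP, hev⟩ := h
  exact ⟨P, hP.trans hd, hev⟩

theorem mono_length {c₁ c₂ : ℕ} (hc : c₁ ≤ c₂) (h : IsChainPoly f c₁ d g) :
    IsChainPoly f c₂ d g := by
  obtain ⟨P, hP, hev⟩ := h
  refine ⟨rename (Sum.map id (Fin.castLE hc)) P, (totalDegree_rename_le _ _).trans hP,
    fun θ => ?_⟩
  rw [eval_rename, hev θ]
  congr 2
  funext k
  cases k <;> rfl

theorem const (r : ℝ) : IsChainPoly f c d fun _ => r :=
  ⟨C r, by simp, fun θ => by simp⟩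

theorem coord (i : I) (hd : 1 ≤ d) : IsChainPoly f c d fun θ => θ i :=
  ⟨X (Sum.inl i), by simpa using hd, fun θ => by simp⟩

theorem chain {k : ℕ} (hk : k < c) (hd : 1 ≤ d) : IsChainPoly f c d (f k) :=
  ⟨X (Sum.inr ⟨k, hk⟩), by simpa using hd, fun θ => by simp⟩

theorem add (h₁ : IsChainPoly f c d g₁) (h₂ : IsChainPoly f c d g₂) :
    IsChainPoly f c d fun θ => g₁ θ + g₂ θ := by
  obtain ⟨P₁, hP₁, hev₁⟩ := h₁
  obtain ⟨P₂, hP₂, hev₂⟩ := h₂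
  exact ⟨P₁ + P₂, (totalDegree_add _ _).trans (max_le hP₁ hP₂),
    fun θ => by simp [hev₁ θ, hev₂ θ]⟩

theorem mul (h₁ : IsChainPoly f c d₁ g₁) (h₂ : IsChainPoly f c d₂ g₂) :
    IsChainPoly f c (d₁ + d₂) fun θ => g₁ θ * g₂ θ := by
  obtain ⟨P₁, hP₁, hev₁⟩ := h₁
  obtain ⟨P₂, hP₂, hev₂⟩ := h₂
  exact ⟨P₁ * P₂, (totalDegree_mul _ _).trans (add_le_add hP₁ hP₂),
    fun θ => by simp [hev₁ θ, hev₂ θ]⟩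

theorem const_mul (r : ℝ) (h : IsChainPoly f c d g) : IsChainPoly f c d fun θ => r * g θ :=
  (const (d := 0) r).mul h |>.mono_degree (by omega)

theorem sum {γ : Type*} (s : Finset γ) {g : γ → (I → ℝ) → ℝ}
    (h : ∀ a ∈ s, IsChainPoly f c d (g a)) : IsChainPoly f c d fun θ => ∑ a ∈ s, g a θ := by
  classical
  induction s using Finset.induction with
  | empty => exact (const 0).congr (by simp)
  | insert a s ha ih =>
    refine ((h a (Finset.mem_insert_self a s)).add
      (ih fun b hb => h b (Finset.mem_insert_of_mem hb))).congr fun θ => ?_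
    rw [Finset.sum_insert ha]

theorem quadratic (c₀ c₁ c₂ : ℝ) (h : IsChainPoly f c 1 g) :
    IsChainPoly f c 2 fun θ => c₀ + c₁ * g θ + c₂ * g θ ^ 2 :=
  ((const c₀).add ((h.const_mul c₁).mono_degree (by omega))).add
    ((h.mul h).const_mul c₂ |>.congr fun θ => by ring)

end IsChainPoly

theorem isPfaffianWithFormat_univ_of_isChainPoly {I : Type} [Fintype I] [DecidableEq I]
    {f : ℕ → (I → ℝ) → ℝ} {g : (I → ℝ) → ℝ} {α β ℓ : ℕ} (hα : 1 ≤ α)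
    (hf : ∀ k < ℓ, ∀ θ, AnalyticAt ℝ (f k) θ)
    (hf' : ∀ k < ℓ, ∀ i : I, IsChainPoly f (k + 1) α fun θ => fderiv ℝ (f k) θ (Pi.single i 1))
    (hg : IsChainPoly f ℓ β g) :
    IsPfaffianWithFormat Set.univ g α β ℓ := by
  refine ⟨fun k => f k, ⟨isOpen_univ, hα, fun k θ _ => hf k k.2 θ, fun k i => ?_⟩, ?_⟩
  · obtain ⟨P, hP, hev⟩ := hf' k k.2 i
    exact ⟨P, hP, fun θ _ => hev θ⟩
  · obtain ⟨Q, hQ, hev⟩ := hg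
    exact ⟨Q, hQ, fun θ _ => hev θ⟩

theorem fderiv_comp_apply_of_hasDerivAt {E : Type*} [NormedAddCommGroup E] [NormedSpace ℝ E]
    {φ : ℝ → ℝ} {φ' : ℝ} {g : E → ℝ} {θ : E} (hφ : HasDerivAt φ φ' (g θ))
    (hg : DifferentiableAt ℝ g θ) (v : E) :
    fderiv ℝ (fun θ => φ (g θ)) θ v = φ' * fderiv ℝ g θ v := by
  rw [← Function.comp_def, (hφ.comp_hasFDerivAt θ hg.hasFDerivAt).fderiv]
  rfl

section Network

variable {L : ℕ} {n : ℕ → ℕ} {σ : ℝ → ℝ} {ξ : Fin (n 0) → ℝ}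

def netWeightCLM (l : ℕ) (j : Fin (n (l + 1))) (i : Fin (n l + 1)) :
    (ParamIdx L n → ℝ) →L[ℝ] ℝ :=
  if hl : l < L then ContinuousLinearMap.proj (⟨⟨l, hl⟩, (j, i)⟩ : ParamIdx L n) else 0

theorem netWeightCLM_apply (l : ℕ) (j : Fin (n (l + 1))) (i : Fin (n l + 1))
    (θ : ParamIdx L n → ℝ) : netWeightCLM l j i θ = netWeight θ l j i := by
  unfold netWeightCLM netWeight
  split_ifs <;> rfl

theorem netZ_succ_zero (θ : ParamIdx L n → ℝ) (l : ℕ) : netZ σ θ ξ (l + 1) 0 = 1 := rfl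

theorem netZ_succ_succ (θ : ParamIdx L n → ℝ) (l : ℕ) (k : Fin (n (l + 1))) :
    netZ σ θ ξ (l + 1) k.succ = σ (netPreact σ θ ξ l k) := rfl

theorem analyticAt_netPreact {θ : ParamIdx L n → ℝ} {l : ℕ}
    (hz : ∀ i, AnalyticAt ℝ (fun θ => netZ σ θ ξ l i) θ) (j : Fin (n (l + 1))) :
    AnalyticAt ℝ (fun θ => netPreact σ θ ξ l j) θ := by
  simp only [netPreact, ← netWeightCLM_apply]
  exact Finset.analyticAt_fun_sum _ fun i _ => ((netWeightCLM l j i).analyticAt θ).mul (hz i)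

theorem analyticAt_netZ (hσ : ∀ t, AnalyticAt ℝ σ t) (θ : ParamIdx L n → ℝ) :
    ∀ l (i : Fin (n l + 1)), AnalyticAt ℝ (fun θ => netZ σ θ ξ l i) θ
  | 0, _ => analyticAt_const
  | l + 1, i => i.cases (by simpa only [netZ_succ_zero] using analyticAt_const) fun k => by
      simp only [netZ_succ_succ]
      exact (hσ _).comp (analyticAt_netPreact (analyticAt_netZ hσ θ l) k)

theorem fderiv_netPreact_apply (hσ : ∀ t, AnalyticAt ℝ σ t) (θ v : ParamIdx L n → ℝ) (l : ℕ)
    (j : Fin (n (l + 1))) :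
    fderiv ℝ (fun θ => netPreact σ θ ξ l j) θ v =
      ∑ i, (netWeight θ l j i * fderiv ℝ (fun θ => netZ σ θ ξ l i) θ v +
        netZ σ θ ξ l i * netWeight v l j i) := by
  have hz := fun i => (analyticAt_netZ (ξ := ξ) hσ θ l i).differentiableAt
  simp only [netPreact, ← netWeightCLM_apply]
  rw [fderiv_fun_sum fun i _ => (netWeightCLM l j i).differentiableAt.fun_mul (hz i)]
  rw [_root_.sum_apply]
  refine Finset.sum_congr rfl fun i _ => ?_
  rw [fderiv_fun_mul (netWeightCLM l j i).differentiableAt (hz i), ContinuousLinearMap.fderiv]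
  rfl

theorem fderiv_netZ_succ_succ_apply (hσ : ∀ t, AnalyticAt ℝ σ t) {c₀ c₁ c₂ : ℝ}
    (hσ' : HasQuadraticDeriv σ c₀ c₁ c₂) (θ v : ParamIdx L n → ℝ)
    (l : ℕ) (k : Fin (n (l + 1))) :
    fderiv ℝ (fun θ => netZ σ θ ξ (l + 1) k.succ) θ v =
      (c₀ + c₁ * netZ σ θ ξ (l + 1) k.succ + c₂ * netZ σ θ ξ (l + 1) k.succ ^ 2) *
        fderiv ℝ (fun θ => netPreact σ θ ξ l k) θ v := by
  simp only [netZ_succ_succ]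
  exact fderiv_comp_apply_of_hasDerivAt (hσ' _)
    (analyticAt_netPreact (analyticAt_netZ hσ θ l) k).differentiableAt v

end Network

def HiddenUnitsFrom {L : ℕ} {n : ℕ → ℕ} (F : ℕ → (ParamIdx L n → ℝ) → ℝ) (σ : ℝ → ℝ)
    (ξ : Fin (n 0) → ℝ) (o h : ℕ) : Prop :=
  ∀ l, l + 1 ≤ L - 1 → ∀ (k : Fin (n (l + 1))) θ, F (o + (l * h + k)) θ = netZ σ θ ξ (l + 1) k.succ

section NetworkChain

variable {L h o : ℕ} {n : ℕ → ℕ} {σ : ℝ → ℝ} {ξ : Fin (n 0) → ℝ}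
  {F : ℕ → (ParamIdx L n → ℝ) → ℝ}

theorem isChainPoly_netWeight (c : ℕ) (l : ℕ) (j : Fin (n (l + 1))) (i : Fin (n l + 1)) :
    IsChainPoly F c 1 fun θ => netWeight θ l j i := by
  unfold netWeight
  split_ifs
  · exact .coord _ le_rfl
  · exact .const 0

theorem isChainPoly_netZ (hhid : ∀ l, 1 ≤ l → l ≤ L - 1 → n l = h)
    (hF : HiddenUnitsFrom F σ ξ o h) {l : ℕ} (hl : l + 1 ≤ L - 1) (i : Fin (n (l + 1) + 1)) :
    IsChainPoly F (o + (l + 1) * h) 1 fun θ => netZ σ θ ξ (l + 1) i := by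
  refine i.cases ((IsChainPoly.const 1).congr fun θ => rfl) fun k => ?_
  have hk : (k : ℕ) < h := hhid (l + 1) (by omega) hl ▸ k.2
  exact (IsChainPoly.chain (by nlinarith) le_rfl).congr (hF l hl k)

theorem isChainPoly_fderiv_netZ_succ_succ (hF : HiddenUnitsFrom F σ ξ o h)
    (hσ : ∀ t, AnalyticAt ℝ σ t) {c₀ c₁ c₂ : ℝ} (hσ' : HasQuadraticDeriv σ c₀ c₁ c₂)
    (v : ParamIdx L n → ℝ) {l c : ℕ} (hl : l + 1 ≤ L - 1) (k : Fin (n (l + 1)))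
    (hc : o + (l * h + k) < c)
    (hD : IsChainPoly F c (3 * l) fun θ => fderiv ℝ (fun θ => netPreact σ θ ξ l k) θ v) :
    IsChainPoly F c (3 * l + 2) fun θ => fderiv ℝ (fun θ => netZ σ θ ξ (l + 1) k.succ) θ v := by
  have hz : IsChainPoly F c 1 fun θ => netZ σ θ ξ (l + 1) k.succ :=
    (IsChainPoly.chain hc le_rfl).congr (hF l hl k)
  refine ((hz.quadratic c₀ c₁ c₂).mul hD).mono_degree (by omega) |>.congr fun θ => ?_
  rw [fderiv_netZ_succ_succ_apply hσ hσ']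

theorem isChainPoly_fderiv_netPreact (hhid : ∀ l, 1 ≤ l → l ≤ L - 1 → n l = h)
    (hF : HiddenUnitsFrom F σ ξ o h) (hσ : ∀ t, AnalyticAt ℝ σ t) {c₀ c₁ c₂ : ℝ}
    (hσ' : HasQuadraticDeriv σ c₀ c₁ c₂) (v : ParamIdx L n → ℝ) :
    ∀ l, l ≤ L - 1 → ∀ j : Fin (n (l + 1)),
      IsChainPoly F (o + l * h) (3 * l) fun θ => fderiv ℝ (fun θ => netPreact σ θ ξ l j) θ v
  | 0, _, j =>
    (IsChainPoly.const (∑ i, (Fin.cons 1 ξ : Fin (n 0 + 1) → ℝ) i * netWeight v 0 j i)).congr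
      fun θ => by simp [fderiv_netPreact_apply hσ, netZ]
  | l + 1, hl, j => by
    have hdz : ∀ i : Fin (n (l + 1) + 1), IsChainPoly F (o + (l + 1) * h) (3 * l + 2)
        fun θ => fderiv ℝ (fun θ => netZ σ θ ξ (l + 1) i) θ v := by
      refine fun i => i.cases ((IsChainPoly.const 0).congr fun θ => by simp [netZ]) fun k => ?_
      have hk : (k : ℕ) < h := hhid (l + 1) (by omega) hl ▸ k.2
      exact isChainPoly_fderiv_netZ_succ_succ hF hσ hσ' v hl k (by nlinarith)
        ((isChainPoly_fderiv_netPreact hhid hF hσ hσ' v l (by omega) k).mono_length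
          (by nlinarith))
    have hzW : ∀ i : Fin (n (l + 1) + 1), IsChainPoly F (o + (l + 1) * h) (3 * l + 3)
        fun θ => netZ σ θ ξ (l + 1) i * netWeight v (l + 1) j i := fun i =>
      ((isChainPoly_netZ hhid hF hl i).mul (.const (d := 0) _)).mono_degree (by omega)
    refine (IsChainPoly.sum Finset.univ fun i _ =>
      ((isChainPoly_netWeight _ _ j i).mul (hdz i)).mono_degree (by omega) |>.add (hzW i)).congr
      fun θ => ?_
    rw [fderiv_netPreact_apply hσ]

theorem isChainPoly_fderiv_netOutput (hhid : ∀ l, 1 ≤ l → l ≤ L - 1 → n l = h)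
    (hF : HiddenUnitsFrom F σ ξ o h)
    (hout : ∀ θ, F (o + h * (L - 1)) θ = logisticFn (netOutLin σ θ ξ))
    (hσ : ∀ t, AnalyticAt ℝ σ t) {c₀ c₁ c₂ : ℝ} (hσ' : HasQuadraticDeriv σ c₀ c₁ c₂)
    (v : ParamIdx L n → ℝ) :
    IsChainPoly F (o + h * (L - 1) + 1) (3 * (L - 1) + 2)
      fun θ => fderiv ℝ (fun θ => logisticFn (netOutLin σ θ ξ)) θ v := by
  have ha := fun (θ : ParamIdx L n → ℝ) j =>
    analyticAt_netPreact (ξ := ξ) (analyticAt_netZ hσ θ (L - 1)) j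
  have hu : IsChainPoly F (o + h * (L - 1) + 1) 1 fun θ => logisticFn (netOutLin σ θ ξ) :=
    (IsChainPoly.chain (lt_add_one _) le_rfl).congr hout
  have hD : IsChainPoly F (o + h * (L - 1) + 1) (3 * (L - 1)) fun θ =>
      ∑ j, fderiv ℝ (fun θ => netPreact σ θ ξ (L - 1) j) θ v :=
    IsChainPoly.sum _ fun j _ => (isChainPoly_fderiv_netPreact hhid hF hσ hσ' v (L - 1) le_rfl j
      |>.mono_length (by rw [Nat.mul_comm]; omega))
  refine ((hu.mul ((IsChainPoly.const 1).add (hu.const_mul (-1)))).mul hD).mono_degree (by omega)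
    |>.congr fun θ => ?_
  simp only [logisticFn_eq_sigmoid, netOutLin]
  rw [fderiv_comp_apply_of_hasDerivAt (Real.hasDerivAt_sigmoid _)
    (Finset.analyticAt_fun_sum _ fun j _ => ha θ j).differentiableAt,
    fderiv_fun_sum fun j _ => (ha θ j).differentiableAt, _root_.sum_apply]
  ring

end NetworkChain

theorem Nat.mul_add_div_mod_of_lt {q b r : ℕ} (hr : r < b) :
    (q * b + r) / b = q ∧ (q * b + r) % b = r :=
  (Nat.div_mod_unique (by omega)).2 ⟨by ring, hr⟩

/-- The Pfaffian chain of the empirical risk. With `B = h (L - 1) + 1`, the block of indices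
`[p B, (p + 1) B)` belongs to the data point `p`: index `p B + l h + k` holds the hidden
activation `σ(a^{l+1}_k)`, and index `p B + h (L - 1)` holds the network output. -/
def lossChain (L h : ℕ) (n : ℕ → ℕ) (σ : ℝ → ℝ) {m : ℕ} (x : Fin m → Fin (n 0) → ℝ) (t : ℕ)
    (θ : ParamIdx L n → ℝ) : ℝ :=
  if hp : t / (h * (L - 1) + 1) < m then
    if t % (h * (L - 1) + 1) < h * (L - 1) then
      if hk : t % (h * (L - 1) + 1) % h < n (t % (h * (L - 1) + 1) / h + 1) then
        netZ σ θ (x ⟨_, hp⟩) (t % (h * (L - 1) + 1) / h + 1) (Fin.succ ⟨_, hk⟩)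
      else 0
    else logisticFn (netOutLin σ θ (x ⟨_, hp⟩))
  else 0

section LossChain

variable {L h m : ℕ} {n : ℕ → ℕ} {σ : ℝ → ℝ} {x : Fin m → Fin (n 0) → ℝ}

theorem lossChain_eq_netZ {t : ℕ} {p : Fin m} {l : ℕ} {k : Fin (n (l + 1))}
    (hp : t / (h * (L - 1) + 1) = p) (hr : t % (h * (L - 1) + 1) < h * (L - 1))
    (hl : t % (h * (L - 1) + 1) / h = l) (hk : t % (h * (L - 1) + 1) % h = k)
    (θ : ParamIdx L n → ℝ) : lossChain L h n σ x t θ = netZ σ θ (x p) (l + 1) k.succ := by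
  obtain ⟨p, hpm⟩ := p
  obtain ⟨k, hkn⟩ := k
  dsimp only at hp hk
  subst hp hl hk
  rw [lossChain, dif_pos hpm, if_pos hr, dif_pos hkn]

theorem lossChain_eq_output {t : ℕ} {p : Fin m} (hp : t / (h * (L - 1) + 1) = p)
    (hr : ¬ t % (h * (L - 1) + 1) < h * (L - 1)) (θ : ParamIdx L n → ℝ) :
    lossChain L h n σ x t θ = logisticFn (netOutLin σ θ (x p)) := by
  obtain ⟨p, hpm⟩ := p
  dsimp only at hp
  subst hp
  rw [lossChain, dif_pos hpm, if_neg hr]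

theorem lossChain_hidden (hhid : ∀ l, 1 ≤ l → l ≤ L - 1 → n l = h) (p : Fin m) {l : ℕ}
    (hl : l + 1 ≤ L - 1) (k : Fin (n (l + 1))) (θ : ParamIdx L n → ℝ) :
    lossChain L h n σ x (p * (h * (L - 1) + 1) + (l * h + k)) θ =
      netZ σ θ (x p) (l + 1) k.succ := by
  have hk : (k : ℕ) < h := hhid (l + 1) (by omega) hl ▸ k.2
  have hr : l * h + k < h * (L - 1) := by nlinarith
  obtain ⟨hp, hr'⟩ :=
    Nat.mul_add_div_mod_of_lt (q := p) (show l * h + k < h * (L - 1) + 1 by omega)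
  obtain ⟨hl', hk'⟩ := Nat.mul_add_div_mod_of_lt (q := l) hk
  rw [← hr'] at hr hl' hk'
  exact lossChain_eq_netZ hp hr hl' hk' θ

theorem hiddenUnitsFrom_lossChain (hhid : ∀ l, 1 ≤ l → l ≤ L - 1 → n l = h) (p : Fin m) :
    HiddenUnitsFrom (lossChain L h n σ x) σ (x p) (p * (h * (L - 1) + 1)) h :=
  fun _ hl k θ => lossChain_hidden hhid p hl k θ

theorem lossChain_output (p : Fin m) (θ : ParamIdx L n → ℝ) :
    lossChain L h n σ x (p * (h * (L - 1) + 1) + h * (L - 1)) θ =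
      logisticFn (netOutLin σ θ (x p)) := by
  obtain ⟨hp, hr⟩ := Nat.mul_add_div_mod_of_lt (q := p) (lt_add_one (h * (L - 1)))
  exact lossChain_eq_output hp (by omega) θ

theorem lossChain_index_cases (hhid : ∀ l, 1 ≤ l → l ≤ L - 1 → n l = h) {t : ℕ}
    (ht : t < m * (h * (L - 1) + 1)) :
    (∃ (p : Fin m) (l : ℕ) (k : Fin (n (l + 1))),
      l + 1 ≤ L - 1 ∧ t = p * (h * (L - 1) + 1) + (l * h + k)) ∨
    ∃ p : Fin m, t = p * (h * (L - 1) + 1) + h * (L - 1) := by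
  have hp : t / (h * (L - 1) + 1) < m := (Nat.div_lt_iff_lt_mul (by omega)).2 ht
  have ht' := (Nat.div_add_mod' t (h * (L - 1) + 1)).symm
  have hr := Nat.mod_lt t (show 0 < h * (L - 1) + 1 by omega)
  generalize t % (h * (L - 1) + 1) = r at ht' hr
  by_cases hrh : r < h * (L - 1)
  · have hh : 0 < h := Nat.pos_of_ne_zero (by rintro rfl; simp at hrh)
    have hl : r / h < L - 1 := (Nat.div_lt_iff_lt_mul hh).2 (by rwa [Nat.mul_comm] at hrh)
    have hk : r % h < n (r / h + 1) := by
      rw [hhid (r / h + 1) (Nat.le_add_left 1 _) hl]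
      exact Nat.mod_lt r hh
    refine .inl ⟨⟨_, hp⟩, r / h, ⟨_, hk⟩, hl, ?_⟩
    have := (Nat.div_add_mod' r h).symm
    dsimp only
    omega
  · exact .inr ⟨⟨_, hp⟩, by dsimp only; omega⟩

theorem analyticAt_lossChain (hhid : ∀ l, 1 ≤ l → l ≤ L - 1 → n l = h)
    (hσ : ∀ t, AnalyticAt ℝ σ t) {t : ℕ} (ht : t < m * (h * (L - 1) + 1))
    (θ : ParamIdx L n → ℝ) : AnalyticAt ℝ (lossChain L h n σ x t) θ := by
  rcases lossChain_index_cases hhid ht with ⟨p, l, k, hl, rfl⟩ | ⟨p, rfl⟩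
  · rw [funext (lossChain_hidden hhid p hl k)]
    exact analyticAt_netZ hσ θ (l + 1) k.succ
  · rw [funext (lossChain_output p), logisticFn_eq_sigmoid]
    exact (Finset.analyticAt_fun_sum _ fun j _ =>
      analyticAt_netPreact (analyticAt_netZ hσ θ (L - 1)) j).sigmoid'

theorem isChainPoly_fderiv_lossChain (hhid : ∀ l, 1 ≤ l → l ≤ L - 1 → n l = h)
    (hσ : ∀ t, AnalyticAt ℝ σ t) {c₀ c₁ c₂ : ℝ} (hσ' : HasQuadraticDeriv σ c₀ c₁ c₂) {t : ℕ}
    (ht : t < m * (h * (L - 1) + 1)) (v : ParamIdx L n → ℝ) :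
    IsChainPoly (lossChain L h n σ x) (t + 1) (3 * (L - 1) + 2)
      fun θ => fderiv ℝ (lossChain L h n σ x t) θ v := by
  rcases lossChain_index_cases hhid ht with ⟨p, l, k, hl, rfl⟩ | ⟨p, rfl⟩
  · rw [funext (lossChain_hidden hhid p hl k)]
    have hF := hiddenUnitsFrom_lossChain (σ := σ) (x := x) hhid p
    exact (isChainPoly_fderiv_netZ_succ_succ hF hσ hσ' v hl k (lt_add_one _)
      ((isChainPoly_fderiv_netPreact hhid hF hσ hσ' v l (by omega) k).mono_length
        (by omega))).mono_degree (by omega)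
  · rw [funext (lossChain_output p)]
    exact isChainPoly_fderiv_netOutput hhid (hiddenUnitsFrom_lossChain hhid p)
      (lossChain_output p) hσ hσ' v

theorem isChainPoly_empiricalRisk (y : Fin m → ℝ) :
    IsChainPoly (lossChain L h n σ x) (m * (h * (L - 1) + 1)) 2
      fun θ => (1 / (m : ℝ)) * ∑ p, (y p - logisticFn (netOutLin σ θ (x p))) ^ 2 := by
  refine (IsChainPoly.sum Finset.univ fun p _ => ?_).const_mul _
  have hidx : p * (h * (L - 1) + 1) + h * (L - 1) < m * (h * (L - 1) + 1) := by
    nlinarith [Nat.mul_le_mul_right (h * (L - 1) + 1) p.2]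
  have hu := (IsChainPoly.chain (f := lossChain L h n σ x) hidx le_rfl).congr (lossChain_output p)
  have hdiff := (IsChainPoly.const (y p)).add (hu.const_mul (-1))
  exact (hdiff.mul hdiff).congr fun θ => by ring

end LossChain

theorem statement5_general (L : ℕ) (h : ℕ) (n : ℕ → ℕ)
    (hhid : ∀ l : ℕ, 1 ≤ l → l ≤ L - 1 → n l = h)
    (σ : ℝ → ℝ) (hσ : σ = Real.tanh ∨ σ = logisticFn)
    (m : ℕ) (x : Fin m → Fin (n 0) → ℝ) (y : Fin m → ℝ) :
    IsPfaffianWithFormat (ι := ParamIdx L n) Set.univ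
      (fun θ => (1 / (m : ℝ)) * ∑ p, (y p - logisticFn (netOutLin σ θ (x p))) ^ 2)
      (3 * (L - 2) + 5) 2 (m * (h * (L - 1) + 1)) := by
  have hσa : ∀ t, AnalyticAt ℝ σ t := by
    rcases hσ with rfl | rfl
    exacts [analyticAt_tanh, fun t => logisticFn_eq_sigmoid ▸ analyticAt_sigmoid]
  obtain ⟨c₀, c₁, c₂, hσ'⟩ : ∃ c₀ c₁ c₂, HasQuadraticDeriv σ c₀ c₁ c₂ := by
    rcases hσ with rfl | rfl
    exacts [⟨_, _, _, hasQuadraticDeriv_tanh⟩,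
      ⟨_, _, _, logisticFn_eq_sigmoid ▸ hasQuadraticDeriv_sigmoid⟩]
  exact isPfaffianWithFormat_univ_of_isChainPoly (by omega)
    (fun t ht => analyticAt_lossChain hhid hσa ht)
    (fun t ht i => (isChainPoly_fderiv_lossChain hhid hσa hσ' ht _).mono_degree (by omega))
    (isChainPoly_empiricalRisk y)

/-- For a feedforward network with `L ≥ 2` layers, all hidden layers of
width `h`, hidden activation `tanh` or the logistic sigmoid, and last-layer output
`s(a^L)` with `s` the logistic sigmoid, the MSE empirical risk on a dataset of `m` points
is a Pfaffian function of the parameters of format `(3(L−2)+5, 2, m(h(L−1)+1))`. -/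
theorem statement5 (L : ℕ) (hL : 2 ≤ L) (h : ℕ) (n : ℕ → ℕ)
    (hhid : ∀ l : ℕ, 1 ≤ l → l ≤ L - 1 → n l = h) (hout : n L = 1)
    (σ : ℝ → ℝ) (hσ : σ = Real.tanh ∨ σ = logisticFn)
    (m : ℕ) (x : Fin m → Fin (n 0) → ℝ) (y : Fin m → ℝ) :
    IsPfaffianWithFormat (ι := ParamIdx L n) Set.univ
      (fun θ => (1 / (m : ℝ)) * ∑ p, (y p - logisticFn (netOutLin σ θ (x p))) ^ 2)
      (3 * (L - 2) + 5) 2 (m * (h * (L - 1) + 1)) :=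
  statement5_general L h n hhid σ hσ m x y
end
end

section
/- Let f: U → ℝ (U ⊆ ℝⁿ open) be a Pfaffian function with respect to a Pfaffian chain (f₁,…,f_ℓ) of degree α, taking values in (0,1), and suppose each partial derivative ∂f/∂x_j is a polynomial of total degree at most d in the variables (x, f₁(x),…,f_ℓ(x)). Then for any y ∈ ℝ, the function x ↦ −y·log f(x) − (1−y)·log(1−f(x)) is a Pfaffian function of format (max(d+2, α), 1, ℓ+4): the extended sequence (f₁,…,f_ℓ, 1/f, log f, 1/(1−f), log(1−f)) is a Pfaffian chain of degree at most max(d+2, α), and the function is a polynomial of degree 1 in this extended chain. -/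
open MvPolynomial

noncomputable section

/-- Evaluation of `Fin.append` below the split point. -/
lemma append_lt' {β : Type*} {ℓ : ℕ} (c : Fin ℓ → β) (v : Fin 4 → β)
    (j : Fin (ℓ + 4)) (hj : j.1 < ℓ) : Fin.append c v j = c ⟨j.1, hj⟩ := by
  have h := Fin.append_left c v ⟨j.1, hj⟩
  rwa [show Fin.castAdd 4 (⟨j.1, hj⟩ : Fin ℓ) = j from Fin.ext rfl] at h

/-- Evaluation of `Fin.append` at or above the split point. -/
lemma append_ge' {β : Type*} {ℓ : ℕ} (c : Fin ℓ → β) (v : Fin 4 → β)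
    (t : Fin 4) : Fin.append c v ⟨ℓ + t.1, by omega⟩ = v t := by
  rw [show (⟨ℓ + t.1, by omega⟩ : Fin (ℓ + 4)) = Fin.natAdd ℓ t from Fin.ext rfl,
    Fin.append_right]

/-- The real logarithm of a positive analytic function is analytic. -/
lemma analyticAt_rlog' {E : Type*} [NormedAddCommGroup E] [NormedSpace ℝ E]
    {f : E → ℝ} {x : E} (hf : AnalyticAt ℝ f x) (hx : 0 < f x) :
    AnalyticAt ℝ (fun t => Real.log (f t)) x := by
  have h2 : AnalyticAt ℝ (fun t => (f t : ℂ)) x :=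
    (Complex.ofRealCLM.analyticAt _).comp hf
  have h3 : AnalyticAt ℂ Complex.log (f x : ℂ) :=
    analyticAt_clog (Complex.ofReal_mem_slitPlane.2 hx)
  have h1 : AnalyticAt ℝ (fun t => (Complex.log (f t : ℂ)).re) x :=
    (Complex.reCLM.analyticAt _).comp
      (AnalyticAt.comp (f := fun t => (f t : ℂ)) h3.restrictScalars h2)
  apply h1.congr
  filter_upwards [hf.continuousAt (Ioi_mem_nhds hx)] with t ht
  rw [← Complex.ofReal_log (le_of_lt ht), Complex.ofReal_re]

/-- Let `f` be a Pfaffian function on an open set `U` with respect to a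
chain `c` of degree `α`, taking values in `(0,1)`, and suppose each partial derivative of
`f` is a polynomial of total degree at most `d` in the coordinates and the chain functions.
Then for any `y ∈ ℝ`, the function `x ↦ −y·log f(x) − (1−y)·log(1−f(x))` is Pfaffian of
format `(max (d+2) α, 1, ℓ+4)`: the extended sequence
`(c, 1/f, log f, 1/(1−f), log(1−f))` is a Pfaffian chain of degree at most `max (d+2) α`,
and the function is a polynomial of degree `1` in this extended chain. -/
theorem statement13 {ι : Type} [Fintype ι] [DecidableEq ι] (ℓ α : ℕ)
    (U : Set (ι → ℝ)) (c : Fin ℓ → (ι → ℝ) → ℝ) (hc : IsPfaffianChain ℓ α U c)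
    (f : (ι → ℝ) → ℝ) (Q : MvPolynomial (ι ⊕ Fin ℓ) ℝ)
    (hf : ∀ x ∈ U, f x = MvPolynomial.eval (Sum.elim x fun k => c k x) Q)
    (hf01 : ∀ x ∈ U, f x ∈ Set.Ioo (0 : ℝ) 1)
    (d : ℕ)
    (hd : ∀ j : ι, ∃ P : MvPolynomial (ι ⊕ Fin ℓ) ℝ, P.totalDegree ≤ d ∧
      ∀ x ∈ U, fderiv ℝ f x (Pi.single j 1) =
        MvPolynomial.eval (Sum.elim x fun k => c k x) P)
    (y : ℝ) :
    IsPfaffianChain (ℓ + 4) (max (d + 2) α) U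
      (Fin.append c ![fun x => (f x)⁻¹, fun x => Real.log (f x),
        fun x => (1 - f x)⁻¹, fun x => Real.log (1 - f x)]) ∧
    (∃ Q' : MvPolynomial (ι ⊕ Fin (ℓ + 4)) ℝ, Q'.totalDegree ≤ 1 ∧
      ∀ x ∈ U, -y * Real.log (f x) - (1 - y) * Real.log (1 - f x) =
        MvPolynomial.eval
          (Sum.elim x fun k =>
            Fin.append c ![fun x => (f x)⁻¹, fun x => Real.log (f x),
              fun x => (1 - f x)⁻¹, fun x => Real.log (1 - f x)] k x) Q') ∧
    IsPfaffianWithFormat U (fun x => -y * Real.log (f x) - (1 - y) * Real.log (1 - f x))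
      (max (d + 2) α) 1 (ℓ + 4) := by
  obtain ⟨hU, hα1, hcan, hcder⟩ := hc
  set v : Fin 4 → (ι → ℝ) → ℝ := ![fun x => (f x)⁻¹, fun x => Real.log (f x),
      fun x => (1 - f x)⁻¹, fun x => Real.log (1 - f x)] with hv
  set g : Fin (ℓ + 4) → (ι → ℝ) → ℝ := Fin.append c v with hgd
  have hglt : ∀ (j : Fin (ℓ + 4)) (hj : j.1 < ℓ), g j = c ⟨j.1, hj⟩ :=
    fun j hj => append_lt' c v j hj
  have hg0 : g ⟨ℓ, by omega⟩ = fun x => (f x)⁻¹ := by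
    have h := append_ge' c v ⟨0, by omega⟩
    simpa [hv] using h
  have hg1 : g ⟨ℓ + 1, by omega⟩ = fun x => Real.log (f x) := by
    have h := append_ge' c v ⟨1, by omega⟩
    simpa [hv] using h
  have hg2 : g ⟨ℓ + 2, by omega⟩ = fun x => (1 - f x)⁻¹ := by
    have h := append_ge' c v ⟨2, by omega⟩
    simpa [hv] using h
  have hg3 : g ⟨ℓ + 3, by omega⟩ = fun x => Real.log (1 - f x) := by
    have h := append_ge' c v ⟨3, by omega⟩
    simpa [hv] using h
  have hpos : ∀ x ∈ U, 0 < f x := fun x hx => (hf01 x hx).1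
  have hpos1 : ∀ x ∈ U, 0 < 1 - f x := fun x hx => by
    have := (hf01 x hx).2; linarith
  -- analyticity of polynomial expressions in the chain
  have hpan : ∀ (R : MvPolynomial (ι ⊕ Fin ℓ) ℝ) (x : ι → ℝ), x ∈ U →
      AnalyticAt ℝ (fun x => MvPolynomial.eval (Sum.elim x fun k => c k x) R) x := by
    intro R x hx
    have h := AnalyticAt.aeval_mvPolynomial (𝕜 := ℝ) (A := ℝ)
      (f := fun (x : ι → ℝ) => Sum.elim x fun k => c k x) (z := x) ?_ R
    · apply h.congr
      filter_upwards with t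
      rw [← MvPolynomial.coe_aeval_eq_eval]; rfl
    · rintro (j | k)
      · exact (ContinuousLinearMap.proj (R := ℝ) (φ := fun _ : ι => ℝ) j).analyticAt x
      · exact hcan k x hx
  have hfan : ∀ x ∈ U, AnalyticAt ℝ f x := fun x hx =>
    (hpan Q x hx).congr
      (Filter.eventuallyEq_of_mem (hU.mem_nhds hx) fun t ht => (hf t ht).symm)
  have h1fan : ∀ x ∈ U, AnalyticAt ℝ (fun x => 1 - f x) x := fun x hx =>
    analyticAt_const.sub (hfan x hx)
  -- analyticity of the extended chain
  have hgan : ∀ i, AnalyticOnNhd ℝ (g i) U := by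
    rintro ⟨iv, hiv⟩ x hx
    rcases lt_or_ge iv ℓ with hi | hi
    · rw [hglt ⟨iv, hiv⟩ hi]; exact hcan _ x hx
    · obtain h | h | h | h : iv = ℓ ∨ iv = ℓ + 1 ∨ iv = ℓ + 2 ∨ iv = ℓ + 3 := by omega
      · subst h; rw [hg0]; exact (hfan x hx).inv (ne_of_gt (hpos x hx))
      · subst h; rw [hg1]; exact analyticAt_rlog' (hfan x hx) (hpos x hx)
      · subst h; rw [hg2]; exact (h1fan x hx).inv (ne_of_gt (hpos1 x hx))
      · subst h; rw [hg3]; exact analyticAt_rlog' (h1fan x hx) (hpos1 x hx)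
  -- the key composition identity for evaluations
  have hcomp : ∀ (x : ι → ℝ) (iv : ℕ) (h1 : iv < ℓ + 4) (h2 : ℓ ≤ iv),
      ((Sum.elim x fun k : Fin (iv + 1) => g (Fin.castLE h1 k) x) ∘
        (Sum.map id (Fin.castLE (by omega : ℓ ≤ iv + 1))))
        = Sum.elim x fun k => c k x := by
    intro x iv h1 h2
    funext s
    cases s with
    | inl a => rfl
    | inr k =>
      show g (Fin.castLE h1 (Fin.castLE _ k)) x = c k x
      exact congrFun (hglt _ k.2) x
  -- the Pfaffian chain property for the extended chain
  have hchain : IsPfaffianChain (ℓ + 4) (max (d + 2) α) U g := by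
    refine ⟨hU, le_max_of_le_left (by omega), hgan, ?_⟩
    rintro ⟨iv, hiv⟩ j
    rcases lt_or_ge iv ℓ with hi | hi
    · obtain ⟨P, hPd, hPe⟩ := hcder ⟨iv, hi⟩ j
      refine ⟨P, hPd.trans (le_max_right _ _), fun x hx => ?_⟩
      rw [hglt ⟨iv, hiv⟩ hi, hPe x hx]
      refine congrArg (fun w => eval w P) (funext fun s => ?_)
      cases s with
      | inl a => rfl
      | inr k =>
        simp only [Sum.elim_inr]
        exact (congrFun (hglt (Fin.castLE hiv k) (Fin.castLE hi k).2) x).symm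
    · obtain ⟨P, hPd, hPe⟩ := hd j
      have hdeg := totalDegree_rename_le
        (Sum.map (id : ι → ι) (Fin.castLE (show ℓ ≤ iv + 1 by omega))) P
      obtain h | h | h | h : ℓ = iv ∨ ℓ + 1 = iv ∨ ℓ + 2 = iv ∨ ℓ + 3 = iv := by omega
      · subst h
        refine ⟨-(X (Sum.inr ⟨ℓ, by omega⟩) ^ 2) *
          rename (Sum.map id (Fin.castLE (by omega : ℓ ≤ ℓ + 1))) P, ?_, fun x hx => ?_⟩
        · refine le_trans (totalDegree_mul _ _) (le_max_of_le_left ?_)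
          rw [totalDegree_neg, totalDegree_X_pow]
          have := hdeg.trans hPd
          omega
        · have hD : HasFDerivAt f (fderiv ℝ f x) x :=
            ((hfan x hx).differentiableAt).hasFDerivAt
          have hne : f x ≠ 0 := ne_of_gt (hpos x hx)
          have hfd : fderiv ℝ (fun x => (f x)⁻¹) x = (-(f x ^ 2)⁻¹) • fderiv ℝ f x :=
            ((hasDerivAt_inv hne).comp_hasFDerivAt x hD).fderiv
          rw [hg0, hfd]
          simp only [map_mul, map_neg, map_pow, eval_X, eval_rename, Sum.elim_inr,
            hcomp x ℓ hiv le_rfl, ← hPe x hx, ContinuousLinearMap.smul_apply, smul_eq_mul]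
          have e1 : g (Fin.castLE (show ℓ + 1 ≤ ℓ + 4 by omega) ⟨ℓ, by omega⟩) x
              = (f x)⁻¹ := congrFun hg0 x
          rw [e1, inv_pow]
      · subst h
        refine ⟨X (Sum.inr ⟨ℓ, by omega⟩) *
          rename (Sum.map id (Fin.castLE (by omega : ℓ ≤ ℓ + 2))) P, ?_, fun x hx => ?_⟩
        · refine le_trans (totalDegree_mul _ _) (le_max_of_le_left ?_)
          rw [totalDegree_X]
          have := hdeg.trans hPd
          omega
        · have hD : HasFDerivAt f (fderiv ℝ f x) x :=
            ((hfan x hx).differentiableAt).hasFDerivAt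
          have hne : f x ≠ 0 := ne_of_gt (hpos x hx)
          have hfd : fderiv ℝ (fun x => Real.log (f x)) x = (f x)⁻¹ • fderiv ℝ f x :=
            (hD.log hne).fderiv
          rw [hg1, hfd]
          simp only [map_mul, eval_X, eval_rename, Sum.elim_inr,
            hcomp x (ℓ + 1) hiv (by omega), ← hPe x hx,
            ContinuousLinearMap.smul_apply, smul_eq_mul]
          have e1 : g (Fin.castLE (show ℓ + 1 + 1 ≤ ℓ + 4 by omega) ⟨ℓ, by omega⟩) x
              = (f x)⁻¹ := congrFun hg0 x
          rw [e1]
      · subst h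
        refine ⟨X (Sum.inr ⟨ℓ + 2, by omega⟩) ^ 2 *
          rename (Sum.map id (Fin.castLE (by omega : ℓ ≤ ℓ + 3))) P, ?_, fun x hx => ?_⟩
        · refine le_trans (totalDegree_mul _ _) (le_max_of_le_left ?_)
          rw [totalDegree_X_pow]
          have := hdeg.trans hPd
          omega
        · have hD : HasFDerivAt f (fderiv ℝ f x) x :=
            ((hfan x hx).differentiableAt).hasFDerivAt
          have hne : (1 : ℝ) - f x ≠ 0 := ne_of_gt (hpos1 x hx)
          have hfd : fderiv ℝ (fun x => (1 - f x)⁻¹) x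
              = (-((1 - f x) ^ 2)⁻¹) • (-fderiv ℝ f x) :=
            ((hasDerivAt_inv hne).comp_hasFDerivAt x (hD.const_sub 1)).fderiv
          rw [hg2, hfd]
          simp only [map_mul, map_pow, eval_X, eval_rename, Sum.elim_inr,
            hcomp x (ℓ + 2) hiv (by omega), ← hPe x hx,
            ContinuousLinearMap.smul_apply, ContinuousLinearMap.neg_apply, smul_eq_mul]
          have e1 : g (Fin.castLE (show ℓ + 2 + 1 ≤ ℓ + 4 by omega) ⟨ℓ + 2, by omega⟩) x
              = (1 - f x)⁻¹ := congrFun hg2 x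
          rw [e1, inv_pow]
          ring
      · subst h
        refine ⟨-X (Sum.inr ⟨ℓ + 2, by omega⟩) *
          rename (Sum.map id (Fin.castLE (by omega : ℓ ≤ ℓ + 4))) P, ?_, fun x hx => ?_⟩
        · refine le_trans (totalDegree_mul _ _) (le_max_of_le_left ?_)
          rw [totalDegree_neg, totalDegree_X]
          have := hdeg.trans hPd
          omega
        · have hD : HasFDerivAt f (fderiv ℝ f x) x :=
            ((hfan x hx).differentiableAt).hasFDerivAt
          have hne : (1 : ℝ) - f x ≠ 0 := ne_of_gt (hpos1 x hx)
          have hfd : fderiv ℝ (fun x => Real.log (1 - f x)) x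
              = (1 - f x)⁻¹ • (-fderiv ℝ f x) := ((hD.const_sub 1).log hne).fderiv
          rw [hg3, hfd]
          simp only [map_mul, map_neg, eval_X, eval_rename, Sum.elim_inr,
            hcomp x (ℓ + 3) hiv (by omega), ← hPe x hx,
            ContinuousLinearMap.smul_apply, ContinuousLinearMap.neg_apply, smul_eq_mul]
          have e1 : g (Fin.castLE (show ℓ + 3 + 1 ≤ ℓ + 4 by omega) ⟨ℓ + 2, by omega⟩) x
              = (1 - f x)⁻¹ := congrFun hg2 x
          rw [e1]
          ring
  -- the degree-one polynomial expressing the target function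
  have hQ' : ∃ Q' : MvPolynomial (ι ⊕ Fin (ℓ + 4)) ℝ, Q'.totalDegree ≤ 1 ∧
      ∀ x ∈ U, -y * Real.log (f x) - (1 - y) * Real.log (1 - f x) =
        MvPolynomial.eval (Sum.elim x fun k => g k x) Q' := by
    refine ⟨C (-y) * X (Sum.inr ⟨ℓ + 1, by omega⟩) +
      C (y - 1) * X (Sum.inr ⟨ℓ + 3, by omega⟩), ?_, fun x hx => ?_⟩
    · refine le_trans (totalDegree_add _ _) (max_le ?_ ?_) <;>
        refine le_trans (totalDegree_mul _ _) ?_ <;>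
          rw [totalDegree_C, totalDegree_X]
    · simp only [map_add, map_mul, eval_C, eval_X, Sum.elim_inr]
      rw [congrFun hg1 x, congrFun hg3 x]
      ring
  obtain ⟨Q', hQ'd, hQ'e⟩ := hQ'
  exact ⟨hchain, ⟨Q', hQ'd, hQ'e⟩, g, hchain, Q', hQ'd, hQ'e⟩
end
end
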